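/- arXiv:2012.01215 — 4 statements merged into one kernel-verified Lean document; each statement's English description precedes it below -/
import Mathlib

section
/- Every x ∈ ℝ^n satisfying F̃(x) = 0 obeys the identity x_n · S_1^n = δ̃(n). -/
/-!
Degenerate stochastic Lotka–Volterra food chains:
`δ̃(n) > 0` iff `F̃` has a (necessarily unique) positive zero.
-/

/-- The set `A_a^b` of involutive permutations of `ℕ` that fix every point outside
`{a, …, b}` and move every point by at most one (products of disjoint transpositions
of the form `(i i+1)` supported in `{a, …, b}`). -/
def Aset (a b : ℕ) : Set (Equiv.Perm ℕ) :=
  {σ | σ * σ = 1 ∧ (∀ j, j ∉ Finset.Icc a b → σ j = j) ∧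
    ∀ j, |((σ j : ℤ)) - (j : ℤ)| ≤ 1}

/-- `S_a^b = Σ_{σ ∈ A_a^b} Π_{j=a}^{b} ã_{j,σ(j)}` (equal to `1` when `a > b`). -/
noncomputable def Ssum (ta : ℕ → ℕ → ℝ) (a b : ℕ) : ℝ :=
  ∑ᶠ σ ∈ Aset a b, ∏ j ∈ Finset.Icc a b, ta j (σ j)

/-- `δ̃(m) = ã_{10} Π_{j=2}^{m} ã_{j,j−1} − Σ_{k=2}^{m} ã_{k0} (Π_{l=k+1}^{m} ã_{l,l−1}) S_1^{k−1}`. -/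
noncomputable def deltaT (ta : ℕ → ℕ → ℝ) (m : ℕ) : ℝ :=
  ta 1 0 * ∏ j ∈ Finset.Icc 2 m, ta j (j - 1) -
    ∑ k ∈ Finset.Icc 2 m, ta k 0 * (∏ l ∈ Finset.Icc (k + 1) m, ta l (l - 1)) * Ssum ta 1 (k - 1)

/-- The drift field `F̃` of the Lotka–Volterra food chain (components indexed by `1 ≤ i ≤ n`). -/
def Ft (n : ℕ) (ta : ℕ → ℕ → ℝ) (x : ℕ → ℝ) (i : ℕ) : ℝ :=
  if i = 1 then ta 1 0 - ta 1 1 * x 1 - ta 1 2 * x 2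
  else if i = n then -ta n 0 + ta n (n - 1) * x (n - 1) - ta n n * x n
  else -ta i 0 + ta i (i - 1) * x (i - 1) - ta i i * x i - ta i (i + 1) * x (i + 1)

/-!
Read backwards, the equations `F̃_n = 0, …, F̃_2 = 0` express every `x_i` affinely in `x_n`:
with `P_i = ∏_{j>i} ã_{j,j−1}`, one has
`P_i x_i = Σ_{k>i} ã_{k0} P_k S_{i+1}^{k−1} + S_{i+1}^n x_n`.
This holds because both sides obey the same three-term recurrence in `i`: `S_a^b` is a
continuant, `S_a^b = ã_{aa} S_{a+1}^b + ã_{a,a+1} ã_{a+1,a} S_{a+2}^b`, obtained by splitting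
`A_a^b` according to whether `σ` fixes `a` or swaps `a` and `a + 1`. Substituting the cases
`i = 1, 2` into `F̃_1 = 0` gives the identity.
-/

open Finset Equiv

section Aset

variable {a b : ℕ} {σ : Perm ℕ}

lemma apply_apply_of_mem_Aset (hσ : σ ∈ Aset a b) (j : ℕ) : σ (σ j) = j := by
  simpa using congrArg (· j) hσ.1

lemma apply_eq_self_of_mem_Aset (hσ : σ ∈ Aset a b) {j : ℕ} (hj : j ∉ Icc a b) : σ j = j :=
  hσ.2.1 j hj

lemma apply_mem_Icc_of_mem_Aset (hσ : σ ∈ Aset a b) {j : ℕ} (hj : j ∈ Icc a b) :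
    σ j ∈ Icc a b := by
  by_contra h
  have := apply_eq_self_of_mem_Aset hσ h
  rw [apply_apply_of_mem_Aset hσ] at this
  exact h (this ▸ hj)

lemma Aset_finite : (Aset a b).Finite := by
  refine (Set.finite_range (Perm.ofSubtype : Perm (Icc a b) → _)).subset ?_
  intro σ hσ
  refine ⟨σ.subtypePerm fun j => ⟨fun h => ?_, apply_mem_Icc_of_mem_Aset hσ⟩,
    Perm.ofSubtype_subtypePerm _ fun j hj => ?_⟩
  · simpa [apply_apply_of_mem_Aset hσ] using apply_mem_Icc_of_mem_Aset hσ h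
  · exact by_contra fun h => hj (apply_eq_self_of_mem_Aset hσ h)

lemma Aset_of_le (h : b ≤ a) : Aset a b = {1} := by
  ext σ
  refine ⟨fun hσ => Equiv.ext fun j => ?_,
    fun hσ => by simp [Set.mem_singleton_iff.1 hσ, Aset]⟩
  by_cases hj : j ∈ Icc a b
  · have := apply_mem_Icc_of_mem_Aset hσ hj
    simp only [mem_Icc] at hj this
    simp only [Perm.coe_one, id_eq]
    omega
  · exact apply_eq_self_of_mem_Aset hσ hj

lemma mem_Aset_succ_iff : σ ∈ Aset (a + 1) b ↔ σ ∈ Aset a b ∧ σ a = a := by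
  refine ⟨fun hσ => ⟨⟨hσ.1, fun j hj => hσ.2.1 j ?_, hσ.2.2⟩, hσ.2.1 a (by simp)⟩,
    fun ⟨hσ, ha⟩ => ⟨hσ.1, fun j hj => ?_, hσ.2.2⟩⟩
  · simp only [mem_Icc] at hj ⊢
    omega
  · obtain rfl | hja := eq_or_ne j a
    · exact ha
    · exact hσ.2.1 j (by simp only [mem_Icc] at hj ⊢; omega)

lemma mul_swap_mem_Aset_iff (hab : a < b) {τ : Perm ℕ} (ha : τ a = a)
    (ha1 : τ (a + 1) = a + 1) :
    τ * swap a (a + 1) ∈ Aset a b ↔ τ ∈ Aset (a + 2) b := by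
  have hcomm : τ * swap a (a + 1) = swap a (a + 1) * τ := by
    rw [Equiv.mul_swap_eq_swap_mul, ha, ha1]
  have hsq : τ * swap a (a + 1) * (τ * swap a (a + 1)) = τ * τ := by
    rw [mul_assoc, hcomm, swap_mul_self_mul]
  have hout : ∀ j, j ≠ a → j ≠ a + 1 → (τ * swap a (a + 1)) j = τ j := fun j h1 h2 => by
    rw [Perm.mul_apply, swap_apply_of_ne_of_ne h1 h2]
  simp only [Aset, Set.mem_ofPred_eq, hsq]
  refine and_congr_right' (and_congr ⟨fun h j hj => ?_, fun h j hj => ?_⟩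
    (forall_congr' fun j => ?_))
  · obtain rfl | hja := eq_or_ne j a
    · exact ha
    obtain rfl | hja1 := eq_or_ne j (a + 1)
    · exact ha1
    rw [← hout j hja hja1]
    exact h j (by simp only [mem_Icc] at hj ⊢; omega)
  · simp only [mem_Icc] at hj
    rw [hout j (by omega) (by omega)]
    exact h j (by simp only [mem_Icc]; omega)
  · obtain rfl | hja := eq_or_ne j a
    · simp [ha, ha1]
    obtain rfl | hja1 := eq_or_ne j (a + 1)
    · simp [ha, ha1]
    rw [hout j hja hja1]

lemma Aset_eq_union (hab : a < b) :
    Aset a b = Aset (a + 1) b ∪ (· * swap a (a + 1)) '' Aset (a + 2) b := by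
  ext σ
  constructor
  · intro hσ
    have hσa : σ a = a ∨ σ a = a + 1 := by
      have hmem := apply_mem_Icc_of_mem_Aset hσ (j := a) (by simp only [mem_Icc]; omega)
      have hdist := abs_le.1 (hσ.2.2 a)
      simp only [mem_Icc] at hmem
      omega
    rcases hσa with ha | ha
    · exact Or.inl (mem_Aset_succ_iff.2 ⟨hσ, ha⟩)
    · refine Or.inr ⟨σ * swap a (a + 1), ?_, by simp [mul_assoc]⟩
      have hτa : (σ * swap a (a + 1)) a = a := by simp [← ha, apply_apply_of_mem_Aset hσ]
      have hτa1 : (σ * swap a (a + 1)) (a + 1) = a + 1 := by simp [ha]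
      rw [← mul_swap_mem_Aset_iff hab hτa hτa1, mul_assoc, swap_mul_self, mul_one]
      exact hσ
  · rintro (hσ | ⟨τ, hτ, rfl⟩)
    · exact (mem_Aset_succ_iff.1 hσ).1
    · exact (mul_swap_mem_Aset_iff hab (apply_eq_self_of_mem_Aset hτ (by simp))
        (apply_eq_self_of_mem_Aset hτ (by simp))).2 hτ

end Aset

section Ssum

variable (ta : ℕ → ℕ → ℝ) {a b : ℕ}

lemma Ssum_of_lt (h : b < a) : Ssum ta a b = 1 := by
  rw [Ssum, Aset_of_le h.le, finsum_mem_singleton, Icc_eq_empty_of_lt h, prod_empty]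

lemma Ssum_self : Ssum ta a a = ta a a := by
  rw [Ssum, Aset_of_le le_rfl, finsum_mem_singleton, Icc_self, prod_singleton,
    Perm.one_apply]

lemma Ssum_eq_add (hab : a < b) :
    Ssum ta a b =
      ta a a * Ssum ta (a + 1) b + ta a (a + 1) * ta (a + 1) a * Ssum ta (a + 2) b := by
  have hdisj : Disjoint (Aset (a + 1) b) ((· * swap a (a + 1)) '' Aset (a + 2) b) := by
    rw [Set.disjoint_left]
    rintro _ hσ ⟨τ, hτ, rfl⟩
    have := (mem_Aset_succ_iff.1 hσ).2
    simp [apply_eq_self_of_mem_Aset hτ (j := a + 1) (by simp)] at this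
  have hIcc : Icc a b = insert a (insert (a + 1) (Icc (a + 2) b)) := by
    ext j
    simp only [mem_Icc, mem_insert]
    omega
  rw [Ssum, Aset_eq_union hab, finsum_mem_union hdisj Aset_finite (Aset_finite.image _),
    finsum_mem_image (mul_left_injective _).injOn, Ssum, Ssum, mul_finsum_mem, mul_finsum_mem]
  congr 1
  · refine finsum_mem_congr rfl fun σ hσ => ?_
    rw [← insert_Icc_add_one_left_eq_Icc hab.le, prod_insert (by simp),
      (mem_Aset_succ_iff.1 hσ).2]
  · refine finsum_mem_congr rfl fun τ hτ => ?_
    have hfix : ∀ j, j < a + 2 → τ j = j := fun j hj =>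
      apply_eq_self_of_mem_Aset hτ (by simp only [mem_Icc]; omega)
    rw [hIcc, prod_insert (by simp), prod_insert (by simp), Perm.mul_apply,
      swap_apply_left, hfix _ (by omega), Perm.mul_apply, swap_apply_right,
      hfix _ (by omega), ← mul_assoc]
    congr 1
    refine prod_congr rfl fun j hj => ?_
    simp only [mem_Icc] at hj
    rw [Perm.mul_apply, swap_apply_of_ne_of_ne (by omega) (by omega)]

end Ssum

theorem eq_zero_of_two_step_recurrence {R : Type*} [NonUnitalNonAssocSemiring R]
    {r p q : ℕ → R} {k m : ℕ}
    (hrec : ∀ i, k ≤ i → i < m → r i = p i * r (i + 1) + q i * r (i + 2))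
    (hm : r m = 0) (hm1 : r (m + 1) = 0) : ∀ i, k ≤ i → i ≤ m + 1 → r i = 0 := by
  intro i hki him
  induction h : m + 1 - i using Nat.strong_induction_on generalizing i with
  | _ d ih =>
    rcases lt_trichotomy i m with hi | rfl | hi
    · rw [hrec i hki hi, ih _ (by omega) (i + 1) (by omega) (by omega) rfl,
        ih _ (by omega) (i + 2) (by omega) (by omega) rfl, mul_zero, mul_zero, add_zero]
    · exact hm
    · rwa [show i = m + 1 by omega]

def subdiagProd (ta : ℕ → ℕ → ℝ) (n i : ℕ) : ℝ :=
  ∏ j ∈ Icc (i + 1) n, ta j (j - 1)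

noncomputable def sourceSum (ta : ℕ → ℕ → ℝ) (n a c : ℕ) : ℝ :=
  ∑ k ∈ Icc a n, ta k 0 * subdiagProd ta n k * Ssum ta c (k - 1)

section Continuant

variable (ta : ℕ → ℕ → ℝ) {n a : ℕ}

lemma deltaT_eq : deltaT ta n = ta 1 0 * subdiagProd ta n 1 - sourceSum ta n 2 1 := rfl

lemma subdiagProd_self : subdiagProd ta n n = 1 := by
  rw [subdiagProd, Icc_eq_empty (by omega), prod_empty]

lemma subdiagProd_eq_mul (h : a < n) :
    subdiagProd ta n a = ta (a + 1) a * subdiagProd ta n (a + 1) := by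
  rw [subdiagProd, ← insert_Icc_add_one_left_eq_Icc h, prod_insert (by simp), Nat.add_sub_cancel]
  rfl

lemma sourceSum_of_lt (c : ℕ) (h : n < a) : sourceSum ta n a c = 0 := by
  rw [sourceSum, Icc_eq_empty (by omega), sum_empty]

lemma sourceSum_self (ha : 0 < a) (h : a ≤ n) :
    sourceSum ta n a a = ta a 0 * subdiagProd ta n a + sourceSum ta n (a + 1) a := by
  rw [sourceSum, ← insert_Icc_add_one_left_eq_Icc h, sum_insert (by simp),
    Ssum_of_lt ta (by omega), mul_one]
  rfl

lemma sourceSum_succ (a : ℕ) :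
    sourceSum ta n (a + 1) a = ta a a * sourceSum ta n (a + 1) (a + 1)
      + ta a (a + 1) * ta (a + 1) a * sourceSum ta n (a + 2) (a + 2) := by
  have hterm : ∀ k ∈ Icc (a + 1) n, ta k 0 * subdiagProd ta n k * Ssum ta a (k - 1) =
      ta a a * (ta k 0 * subdiagProd ta n k * Ssum ta (a + 1) (k - 1)) +
        if a + 2 ≤ k then ta a (a + 1) * ta (a + 1) a *
          (ta k 0 * subdiagProd ta n k * Ssum ta (a + 2) (k - 1)) else 0 := by
    intro k hk
    simp only [mem_Icc] at hk
    obtain rfl | hk' := eq_or_lt_of_le hk.1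
    · rw [if_neg (by omega), Nat.add_sub_cancel, Ssum_self, Ssum_of_lt ta (by omega)]
      ring
    · rw [if_pos (by omega), Ssum_eq_add ta (by omega)]
      ring
  have hfilter : {k ∈ Icc (a + 1) n | a + 2 ≤ k} = Icc (a + 2) n := by
    ext k
    simp only [mem_filter, mem_Icc]
    omega
  rw [sourceSum, sum_congr rfl hterm, sum_add_distrib, ← mul_sum, ← sum_filter, hfilter,
    ← mul_sum]
  rfl

end Continuant

theorem subdiagProd_mul_eq_of_Ft_eq_zero {n : ℕ} (hn : 2 ≤ n) {ta : ℕ → ℕ → ℝ}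
    {x : ℕ → ℝ} (hx : ∀ i, 2 ≤ i → i ≤ n → Ft n ta x i = 0) (i : ℕ) (hi1 : 1 ≤ i)
    (hin : i ≤ n) :
    subdiagProd ta n i * x i = sourceSum ta n (i + 1) (i + 1) + Ssum ta (i + 1) n * x n := by
  obtain ⟨m, rfl⟩ : ∃ m, n = m + 1 := ⟨n - 1, by omega⟩
  suffices h : ∀ i, 1 ≤ i → i ≤ m + 1 →
      subdiagProd ta (m + 1) i * x i - sourceSum ta (m + 1) (i + 1) (i + 1)
        - Ssum ta (i + 1) (m + 1) * x (m + 1) = 0 by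
    linear_combination h i hi1 hin
  refine eq_zero_of_two_step_recurrence (p := fun i => ta (i + 1) (i + 1))
    (q := fun i => ta (i + 1) (i + 2) * ta (i + 2) (i + 1)) (fun i hi1 him => ?_) ?_ ?_
  · have heq := hx (i + 1) (by omega) (by omega)
    rw [Ft, if_neg (by omega), if_neg (by omega), Nat.add_sub_cancel] at heq
    rw [sourceSum_self ta (by omega) (by omega), sourceSum_succ,
      Ssum_eq_add ta (by omega : i + 1 < m + 1), subdiagProd_eq_mul ta (by omega : i < m + 1),
      subdiagProd_eq_mul ta (by omega : i + 1 < m + 1)]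
    linear_combination ta (i + 2) (i + 1) * subdiagProd ta (m + 1) (i + 2) * heq
  · have heq := hx (m + 1) (by omega) le_rfl
    rw [Ft, if_neg (by omega), if_pos rfl, Nat.add_sub_cancel] at heq
    rw [subdiagProd_eq_mul ta (by omega : m < m + 1), subdiagProd_self,
      sourceSum_self ta (by omega) le_rfl, subdiagProd_self, sourceSum_of_lt ta _ (by omega),
      Ssum_self]
    linear_combination heq
  · rw [subdiagProd_self, sourceSum_of_lt ta _ (by omega), Ssum_of_lt ta (by omega)]
    ring

theorem stmt1_general (n : ℕ) (hn : 2 ≤ n) (ta : ℕ → ℕ → ℝ) :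
    ∀ x : ℕ → ℝ, (∀ i, 1 ≤ i → i ≤ n → Ft n ta x i = 0) →
      x n * Ssum ta 1 n = deltaT ta n := by
  intro x hx
  have hback := subdiagProd_mul_eq_of_Ft_eq_zero hn fun i hi hin => hx i (by omega) hin
  have h1 := hback 1 le_rfl (by omega)
  have h2 := hback 2 (by omega) hn
  have heq := hx 1 le_rfl (by omega)
  rw [Ft, if_pos rfl] at heq
  rw [subdiagProd_eq_mul ta (by omega : 1 < n)] at h1
  rw [deltaT_eq, sourceSum_succ, Ssum_eq_add ta (by omega : 1 < n),
    subdiagProd_eq_mul ta (by omega : 1 < n)]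
  linear_combination -ta 1 1 * h1 - ta 1 2 * ta 2 1 * h2 - ta 2 1 * subdiagProd ta n 2 * heq

/-- Every zero `x` of `F̃` satisfies `x_n · S_1^n = δ̃(n)`. -/
theorem stmt1 (n : ℕ) (hn : 2 ≤ n) (ta : ℕ → ℕ → ℝ)
    (hi0 : ∀ i, 2 ≤ i → i ≤ n → 0 < ta i 0)
    (h11 : 0 < ta 1 1)
    (hii : ∀ i, 2 ≤ i → i ≤ n → 0 ≤ ta i i)
    (hlow : ∀ i, 2 ≤ i → i ≤ n → 0 < ta i (i - 1))
    (hup : ∀ i, 1 ≤ i → i ≤ n - 1 → 0 < ta i (i + 1)) :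
    ∀ x : ℕ → ℝ, (∀ i, 1 ≤ i → i ≤ n → Ft n ta x i = 0) →
      x n * Ssum ta 1 n = deltaT ta n :=
  stmt1_general n hn ta
end

section
/- For every 1 ≤ i ≤ n−2, the set A_i^n is the disjoint union of A_{i+1}^n and of the set {β∘(i i+1) : β ∈ A_{i+2}^n}; moreover the map β ↦ β∘(i i+1) is injective on A_{i+2}^n. Consequently, the map sending α ∈ A_{i+1}^n to itself and β ∈ A_{i+2}^n to β∘(i i+1) is a bijection from the disjoint union A_{i+1}^n ⊔ A_{i+2}^n onto A_i^n. -/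
/-!
A permutation in `A_i^n` either fixes `i`, and then lies in `A_{i+1}^n`, or swaps `i` and
`i+1`, and then composing it with `(i i+1)` frees both points, landing in `A_{i+2}^n`.
Conversely, an element of `A_{i+2}^n` fixes `i` and `i+1`. In both directions the permutation
maps `{i, i+1}` to itself, so it commutes with `(i i+1)`, and the product of these two commuting
involutions is again an involution moving each point by at most one.
-/

open Equiv

namespace Aset

variable {a b i n : ℕ} {σ : Perm ℕ}

lemma apply_apply (hσ : σ ∈ Aset a b) (j : ℕ) : σ (σ j) = j := by
  simpa using congr($(hσ.1) j)

lemma apply_left_eq_or (hσ : σ ∈ Aset a b) : σ a = a ∨ σ a = a + 1 := by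
  have hge : a ≤ σ a := by
    -- a point below `a` is fixed, so it cannot be the image of `a`
    by_contra! hlt
    have : σ (σ a) = σ a := hσ.2.1 _ (by simp only [Finset.mem_Icc]; omega)
    have := apply_apply hσ a
    omega
  have := abs_le.mp (hσ.2.2 a)
  omega

lemma mem_succ_iff : σ ∈ Aset (a + 1) b ↔ σ ∈ Aset a b ∧ σ a = a := by
  refine ⟨fun ⟨hinv, hfix, hdisp⟩ => ⟨⟨hinv, fun j hj => hfix j ?_, hdisp⟩, hfix a ?_⟩,
    fun ⟨⟨hinv, hfix, hdisp⟩, ha⟩ => ⟨hinv, fun j hj => ?_, hdisp⟩⟩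
  · simp only [Finset.mem_Icc] at hj ⊢; omega
  · simp
  · rcases eq_or_ne j a with rfl | hja
    · exact ha
    · exact hfix j (by simp only [Finset.mem_Icc] at hj ⊢; omega)

lemma mem_add_two_iff :
    σ ∈ Aset (a + 2) b ↔ σ ∈ Aset a b ∧ σ a = a ∧ σ (a + 1) = a + 1 := by
  rw [mem_succ_iff, mem_succ_iff, and_assoc]

lemma mul_swap_mem (hσ : σ ∈ Aset a b) (ha : a ≤ i) (hb : i < b)
    (h0 : σ i = i ∨ σ i = i + 1) (h1 : σ (i + 1) = i ∨ σ (i + 1) = i + 1) :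
    σ * swap i (i + 1) ∈ Aset a b := by
  have hcomm : Commute σ (swap i (i + 1)) := by
    have hne : σ i ≠ σ (i + 1) := σ.injective.ne (by omega)
    rw [Commute, SemiconjBy, mul_swap_eq_swap_mul]
    rcases h0 with h0 | h0 <;> rcases h1 with h1 | h1 <;> simp [h0, h1, swap_comm] at hne ⊢
  obtain ⟨hinv, hfix, hdisp⟩ := hσ
  refine ⟨?_, fun j hj => ?_, fun j => ?_⟩
  · rw [hcomm.symm.mul_mul_mul_comm, hinv, swap_mul_self, one_mul]
  · simp only [Finset.mem_Icc] at hj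
    rw [Perm.mul_apply, swap_apply_of_ne_of_ne (by omega) (by omega),
      hfix j (by simp only [Finset.mem_Icc]; omega)]
  · simp only [Perm.mul_apply, swap_apply_def]
    split_ifs with hji hji1
    · rcases h1 with h1 | h1 <;> simp [h1, hji]
    · rcases h0 with h0 | h0 <;> simp [h0, hji1]
    · exact hdisp j

lemma mul_swap_mem_add_two (hσ : σ ∈ Aset i n) (hin : i < n) (hi : σ i = i + 1) :
    σ * swap i (i + 1) ∈ Aset (i + 2) n := by
  have hi1 : σ (i + 1) = i := by rw [← hi, apply_apply hσ]
  refine mem_add_two_iff.2 ⟨mul_swap_mem hσ le_rfl hin (.inr hi) (.inl hi1), ?_, ?_⟩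
  · rw [Perm.mul_apply, swap_apply_left, hi1]
  · rw [Perm.mul_apply, swap_apply_right, hi]

lemma mul_swap_mem_of_mem_add_two (hσ : σ ∈ Aset (i + 2) n) (hin : i < n) :
    σ * swap i (i + 1) ∈ Aset i n := by
  obtain ⟨hσ, hi, hi1⟩ := mem_add_two_iff.1 hσ
  exact mul_swap_mem hσ le_rfl hin (.inl hi) (.inr hi1)

end Aset

open Aset in
/-- For `1 ≤ i ≤ n−2`, `A_i^n` is the disjoint union of `A_{i+1}^n` and of
`{β∘(i i+1) : β ∈ A_{i+2}^n}`, and `β ↦ β∘(i i+1)` is injective on `A_{i+2}^n`;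
hence the resulting map is a bijection from `A_{i+1}^n ⊔ A_{i+2}^n` onto `A_i^n`. -/
theorem stmt3 (n : ℕ) (hn : 2 ≤ n) :
    ∀ i, 1 ≤ i → i ≤ n - 2 →
      Aset i n =
          Aset (i + 1) n ∪
            ((fun β : Equiv.Perm ℕ => β * Equiv.swap i (i + 1)) '' Aset (i + 2) n) ∧
      Disjoint (Aset (i + 1) n)
          ((fun β : Equiv.Perm ℕ => β * Equiv.swap i (i + 1)) '' Aset (i + 2) n) ∧
      Set.InjOn (fun β : Equiv.Perm ℕ => β * Equiv.swap i (i + 1)) (Aset (i + 2) n) := by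
  intro i _ hi
  have hin : i < n := by omega
  refine ⟨Set.ext fun σ => ⟨fun hσ => ?_, ?_⟩, Set.disjoint_left.2 ?_,
    (mul_left_injective _).injOn⟩
  · rcases apply_left_eq_or hσ with hfix | hmove
    · exact .inl (mem_succ_iff.2 ⟨hσ, hfix⟩)
    · exact .inr ⟨_, mul_swap_mem_add_two hσ hin hmove, by simp [mul_assoc]⟩
  · rintro (hσ | ⟨β, hβ, rfl⟩)
    · exact (mem_succ_iff.1 hσ).1
    · exact mul_swap_mem_of_mem_add_two hβ hin
  · rintro _ hσ ⟨β, hβ, rfl⟩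
    have hmove : (β * swap i (i + 1)) i = i + 1 := by
      rw [Perm.mul_apply, swap_apply_left, (mem_add_two_iff.1 hβ).2.2]
    have hfix : (β * swap i (i + 1)) i = i := (mem_succ_iff.1 hσ).2
    omega
end

section
/- If δ̃(n−1) ≤ 0 then δ̃(n) < 0. -/
/-!
Expanding along the last index gives `δ̃(m+1) = ã_{m+1,m} δ̃(m) − ã_{m+1,0} S_1^m`. Every term of
`S_1^m` is a product of nonnegative band entries, and the involution pairing `m` with `m − 1`,
`m − 2` with `m − 3`, … contributes a strictly positive one, so `S_1^m > 0`; hence `δ̃(m) ≤ 0`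
forces `δ̃(m+1) < 0`.
-/

open Finset

lemma apply_mem_Icc_iff_of_mem_aset {a b : ℕ} {σ : Equiv.Perm ℕ} (hσ : σ ∈ Aset a b) (j : ℕ) :
    σ j ∈ Icc a b ↔ j ∈ Icc a b := by
  have hσσ : σ (σ j) = j := by simpa using congrArg (· j) hσ.1
  constructor
  · intro h
    by_contra hj
    rw [hσ.2.1 j hj] at h
    exact hj h
  · intro hj
    by_contra h
    have hfix := hσ.2.1 _ h
    rw [hσσ] at hfix
    exact h (hfix ▸ hj)

lemma aset_finite (a b : ℕ) : (Aset a b).Finite := by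
  refine (Set.finite_range (Equiv.Perm.ofSubtype : Equiv.Perm (Icc a b) →* Equiv.Perm ℕ)).subset ?_
  intro σ hσ
  refine ⟨σ.subtypePerm (apply_mem_Icc_iff_of_mem_aset hσ), Equiv.Perm.ofSubtype_subtypePerm _ ?_⟩
  intro j hj
  by_contra h
  exact hj (hσ.2.1 j h)

lemma ssum_pos_of_mem_aset {ta : ℕ → ℕ → ℝ} {a b : ℕ}
    (hnonneg : ∀ σ ∈ Aset a b, ∀ j ∈ Icc a b, 0 ≤ ta j (σ j))
    {σ₀ : Equiv.Perm ℕ} (hσ₀ : σ₀ ∈ Aset a b) (hpos : ∀ j ∈ Icc a b, 0 < ta j (σ₀ j)) :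
    0 < Ssum ta a b := by
  rw [Ssum, ← (aset_finite a b).coe_toFinset, finsum_mem_coe_finset]
  refine sum_pos' (fun σ hσ ↦ prod_nonneg (hnonneg σ ((aset_finite a b).mem_toFinset.mp hσ))) ?_
  exact ⟨σ₀, (aset_finite a b).mem_toFinset.mpr hσ₀, prod_pos hpos⟩

/-- Pairs up `m, m - 1`, then `m - 2, m - 3`, and so on; for odd `m` the point `1` is left fixed,
which is possible because `ã₁₁ > 0` while `ãᵢᵢ` may vanish for `i ≥ 2`. -/
def adjacentPairing (m j : ℕ) : ℕ :=
  if j < 1 + m % 2 ∨ m < j then j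
  else if (j - (1 + m % 2)) % 2 = 0 then j + 1 else j - 1

lemma adjacentPairing_involutive (m : ℕ) : Function.Involutive (adjacentPairing m) := by
  intro j
  unfold adjacentPairing
  split_ifs <;> omega

lemma adjacentPairing_mem_aset (m : ℕ) : (adjacentPairing_involutive m).toPerm ∈ Aset 1 m := by
  refine ⟨Equiv.ext (adjacentPairing_involutive m), fun j hj ↦ ?_, fun j ↦ ?_⟩
  · rw [mem_Icc] at hj
    simp only [Function.Involutive.coe_toPerm, adjacentPairing]
    split_ifs <;> omega
  · simp only [Function.Involutive.coe_toPerm, adjacentPairing, abs_le]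
    split_ifs <;> push_cast <;> omega

lemma ssum_one_pos {ta : ℕ → ℕ → ℝ} {m : ℕ} (h11 : 0 < ta 1 1)
    (hii : ∀ i, 2 ≤ i → i ≤ m → 0 ≤ ta i i)
    (hlow : ∀ i, 2 ≤ i → i ≤ m → 0 < ta i (i - 1))
    (hup : ∀ i, 1 ≤ i → i < m → 0 < ta i (i + 1)) :
    0 < Ssum ta 1 m := by
  refine ssum_pos_of_mem_aset (fun σ hσ j hj ↦ ?_) (adjacentPairing_mem_aset m) (fun j hj ↦ ?_)
  · have hσj := (apply_mem_Icc_iff_of_mem_aset hσ j).mpr hj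
    have hdist := abs_le.mp (hσ.2.2 j)
    rw [mem_Icc] at hj hσj
    obtain h | h | h : σ j = j ∨ σ j = j - 1 ∧ 2 ≤ j ∨ σ j = j + 1 := by omega
    · rw [h]
      obtain rfl | hj2 := eq_or_ne j 1
      exacts [h11.le, hii j (by omega) hj.2]
    · rw [h.1]; exact (hlow j h.2 hj.2).le
    · rw [h]; exact (hup j hj.1 (by omega)).le
  · rw [mem_Icc] at hj
    simp only [Function.Involutive.coe_toPerm, adjacentPairing]
    split_ifs
    · obtain rfl : j = 1 := by omega
      exact h11
    · exact hup j hj.1 (by omega)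
    · exact hlow j (by omega) hj.2

lemma deltaT_succ (ta : ℕ → ℕ → ℝ) {m : ℕ} (hm : 1 ≤ m) :
    deltaT ta (m + 1) = ta (m + 1) m * deltaT ta m - ta (m + 1) 0 * Ssum ta 1 m := by
  have hterm : ∀ k ∈ Icc 2 m,
      ta k 0 * (∏ l ∈ Icc (k + 1) (m + 1), ta l (l - 1)) * Ssum ta 1 (k - 1) =
        ta (m + 1) m * (ta k 0 * (∏ l ∈ Icc (k + 1) m, ta l (l - 1)) * Ssum ta 1 (k - 1)) := by
    intro k hk
    rw [mem_Icc] at hk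
    rw [prod_Icc_succ_top (by omega : k + 1 ≤ m + 1), Nat.add_sub_cancel]
    ring
  unfold deltaT
  rw [prod_Icc_succ_top (by omega : 2 ≤ m + 1), sum_Icc_succ_top (by omega : 2 ≤ m + 1),
    sum_congr rfl hterm, ← mul_sum, Icc_eq_empty (by omega : ¬m + 1 + 1 ≤ m + 1), prod_empty,
    Nat.add_sub_cancel]
  ring

/-- If `δ̃(n−1) ≤ 0` then `δ̃(n) < 0`. -/
theorem stmt6 (n : ℕ) (hn : 2 ≤ n) (ta : ℕ → ℕ → ℝ)
    (hi0 : ∀ i, 2 ≤ i → i ≤ n → 0 < ta i 0)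
    (h11 : 0 < ta 1 1)
    (hii : ∀ i, 2 ≤ i → i ≤ n → 0 ≤ ta i i)
    (hlow : ∀ i, 2 ≤ i → i ≤ n → 0 < ta i (i - 1))
    (hup : ∀ i, 1 ≤ i → i ≤ n - 1 → 0 < ta i (i + 1)) :
    deltaT ta (n - 1) ≤ 0 → deltaT ta n < 0 := by
  intro hprev
  obtain ⟨m, rfl⟩ : ∃ m, n = m + 1 := ⟨n - 1, by omega⟩
  rw [Nat.add_sub_cancel] at hprev
  have hS : 0 < Ssum ta 1 m :=
    ssum_one_pos h11 (fun i hi hm ↦ hii i hi (by omega)) (fun i hi hm ↦ hlow i hi (by omega))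
      (fun i hi hm ↦ hup i hi (by omega))
  have hsub : 0 < ta (m + 1) m := by simpa using hlow (m + 1) hn le_rfl
  have hfeed : 0 < ta (m + 1) 0 := hi0 (m + 1) hn le_rfl
  rw [deltaT_succ ta (by omega)]
  linarith [mul_nonpos_of_nonneg_of_nonpos hsub.le hprev, mul_pos hfeed hS]
end

section
/- Let p > 0. There exists a constant K̃₁ > 0, depending only on p, such that for every probability space (Ω, 𝓕, ℙ), every constant k > 0, and every real random variable Y with E|Y|^{1+p} < ∞ (when p ≤ 1) or with E|Y| < ∞ and E|Y|^{2p} < ∞ (when p > 1), the following hold: if p ≤ 1 then E|k + Y|^{1+p} ≤ k^{1+p} + (1+p)k^p E[Y] + K̃₁ E|Y|^{1+p}; if p > 1 then E|k + Y|^{1+p} ≤ k^{1+p} + (1+p)k^p E[Y] + k^p + K̃₁(E|Y|^{2p} + 1). -/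
/-!
The bound is pointwise, then integrated. For `k + y ≥ 0`, the tangent line of the convex map
`x ↦ x ^ (1 + p)` at `k + y`, evaluated at `k`, gives
`(k + y) ^ (1 + p) ≤ k ^ (1 + p) + (1 + p) k ^ p y + (1 + p) ((k + y) ^ p - k ^ p) y`.
For `p ≤ 1` the last term is at most `(1 + p) |y| ^ (1 + p)` by subadditivity of `x ↦ x ^ p`;
for `p ≥ 1` it is at most `C max(k, |y|) ^ (p - 1) y ^ 2`, and `a ^ (p - 1) u ≤ a ^ p + u ^ p`
splits it into `k ^ p` plus a multiple of `|y| ^ (2p) + 1`. For `k + y < 0` we have `k < |y|`,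
and crude bounds by `|y| ^ (1 + p)` suffice.
-/

open MeasureTheory

namespace Real

theorem rpow_add_mul_sub_le_rpow {q b x : ℝ} (hq : 1 ≤ q) (hb : 0 ≤ b) (hx : 0 ≤ x) :
    b ^ q + q * b ^ (q - 1) * (x - b) ≤ x ^ q := by
  rcases hb.eq_or_lt with rfl | hb
  · rcases hq.eq_or_lt with rfl | hq
    · simp
    · rw [zero_rpow (by linarith), zero_rpow (by linarith)]
      simpa using rpow_nonneg hx q
  -- Bernoulli's inequality at `x / b - 1`, scaled by `b ^ q`.
  have bernoulli := one_add_mul_self_le_rpow_one_add (s := x / b - 1)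
    (by linarith [div_nonneg hx hb.le]) hq
  rw [add_sub_cancel, div_rpow hx hb.le, le_div_iff₀ (rpow_pos_of_pos hb q)] at bernoulli
  calc b ^ q + q * b ^ (q - 1) * (x - b) = (1 + q * (x / b - 1)) * b ^ q := by
        rw [rpow_sub_one hb.ne']; field_simp
    _ ≤ x ^ q := bernoulli

theorem rpow_sub_rpow_mul_sub_le_of_le_one {r a b : ℝ} (ha : 0 ≤ a) (hb : 0 ≤ b)
    (hr : 0 ≤ r) (hr1 : r ≤ 1) : (a ^ r - b ^ r) * (a - b) ≤ |a - b| ^ (1 + r) := by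
  wlog hba : b ≤ a generalizing a b
  · have := this hb ha (by linarith)
    rw [abs_sub_comm]; linarith
  have hsub : a ^ r ≤ b ^ r + (a - b) ^ r := by
    simpa using rpow_add_le_add_rpow hb (sub_nonneg.2 hba) hr hr1
  rw [abs_of_nonneg (sub_nonneg.2 hba), rpow_add' (sub_nonneg.2 hba) (by linarith), rpow_one]
  nlinarith [sub_nonneg.2 hba]

theorem rpow_sub_rpow_mul_sub_le_of_one_le {r a b : ℝ} (ha : 0 ≤ a) (hb : 0 ≤ b)
    (hr : 1 ≤ r) : (a ^ r - b ^ r) * (a - b) ≤ r * max a b ^ (r - 1) * (a - b) ^ 2 := by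
  wlog hba : b ≤ a generalizing a b
  · have := this hb ha (by linarith)
    rw [max_comm]; linarith
  have tangent := rpow_add_mul_sub_le_rpow hr ha hb
  rw [max_eq_left hba]
  nlinarith [sub_nonneg.2 hba]

theorem rpow_sub_one_mul_le_rpow_add_rpow {p a u : ℝ} (hp : 1 ≤ p) (ha : 0 ≤ a)
    (hu : 0 ≤ u) : a ^ (p - 1) * u ≤ a ^ p + u ^ p := by
  rcases le_total u a with hua | hau
  · rcases ha.eq_or_lt with rfl | ha
    · simp [le_antisymm hua hu, rpow_nonneg]
    calc a ^ (p - 1) * u ≤ a ^ (p - 1) * a := by gcongr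
      _ = a ^ p := by rw [← rpow_add_one ha.ne', sub_add_cancel]
      _ ≤ a ^ p + u ^ p := le_add_of_nonneg_right (rpow_nonneg hu p)
  · rcases hu.eq_or_lt with rfl | hu
    · rw [zero_rpow (by linarith), add_zero, mul_zero]; exact rpow_nonneg ha p
    calc a ^ (p - 1) * u ≤ u ^ (p - 1) * u := by gcongr
      _ = u ^ p := by rw [← rpow_add_one hu.ne', sub_add_cancel]
      _ ≤ a ^ p + u ^ p := le_add_of_nonneg_left (rpow_nonneg ha p)

theorem max_rpow_le_rpow_add_rpow {p a b : ℝ} (ha : 0 ≤ a) (hb : 0 ≤ b) :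
    max a b ^ p ≤ a ^ p + b ^ p := by
  rcases max_choice a b with h | h <;> rw [h]
  · exact le_add_of_nonneg_right (rpow_nonneg hb p)
  · exact le_add_of_nonneg_left (rpow_nonneg ha p)

theorem rpow_le_rpow_add_one {y r s : ℝ} (hy : 0 ≤ y) (hr : 0 ≤ r) (hrs : r ≤ s) :
    y ^ r ≤ y ^ s + 1 := by
  rcases le_total y 1 with hy1 | hy1
  · linarith [rpow_le_one hy hy1 hr, rpow_nonneg hy s]
  · linarith [rpow_le_rpow_of_exponent_le hy1 hrs]

end Real

open Real

theorem abs_add_rpow_le_of_nonneg {p k y : ℝ} (hp : 0 ≤ p) (hk : 0 ≤ k) (hky : 0 ≤ k + y) :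
    |k + y| ^ (1 + p) ≤
      k ^ (1 + p) + (1 + p) * k ^ p * y + (1 + p) * (((k + y) ^ p - k ^ p) * y) := by
  have tangent := rpow_add_mul_sub_le_rpow (q := 1 + p) (by linarith) hky hk
  rw [add_sub_cancel_left, sub_add_cancel_left] at tangent
  rw [abs_of_nonneg hky]
  linarith

theorem abs_add_rpow_le_of_neg {p k y : ℝ} (hp : 0 ≤ p) (hk : 0 ≤ k) (hky : k + y < 0) :
    |k + y| ^ (1 + p) ≤ k ^ (1 + p) + (1 + p) * k ^ p * y + (2 + p) * |y| ^ (1 + p) := by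
  have hy : |y| = -y := abs_of_neg (by linarith)
  have h1 : |k + y| ^ (1 + p) ≤ |y| ^ (1 + p) :=
    rpow_le_rpow (abs_nonneg _) (by rw [abs_of_neg hky, hy]; linarith) (by linarith)
  have h2 : k ^ p * |y| ≤ |y| ^ (1 + p) := by
    rw [rpow_add' (abs_nonneg y) (by linarith), rpow_one, mul_comm (|y|)]
    gcongr; linarith
  have h3 : 0 ≤ k ^ (1 + p) := rpow_nonneg hk _
  have h4 : 0 ≤ |y| ^ (1 + p) := rpow_nonneg (abs_nonneg y) _
  have h5 : (1 + p) * k ^ p * y = -((1 + p) * (k ^ p * |y|)) := by rw [hy]; ring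
  nlinarith

theorem abs_add_rpow_le_of_le_one {p k y : ℝ} (hp : 0 ≤ p) (hp1 : p ≤ 1) (hk : 0 ≤ k) :
    |k + y| ^ (1 + p) ≤ k ^ (1 + p) + (1 + p) * k ^ p * y + (2 + p) * |y| ^ (1 + p) := by
  rcases le_or_gt 0 (k + y) with hky | hky
  · have hdiff := rpow_sub_rpow_mul_sub_le_of_le_one hky hk hp hp1
    rw [add_sub_cancel_left] at hdiff
    have := abs_add_rpow_le_of_nonneg hp hk hky
    nlinarith [rpow_nonneg (abs_nonneg y) (1 + p)]
  · exact abs_add_rpow_le_of_neg hp hk hky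

theorem max_rpow_sub_one_mul_mul_sq_le {p c k y : ℝ} (hp : 1 ≤ p) (hc : 0 ≤ c)
    (hk : 0 ≤ k) :
    max k |y| ^ (p - 1) * (c * y ^ 2) ≤ k ^ p + (1 + c ^ p) * (|y| ^ (2 * p) + 1) := by
  have hy2 : (c * y ^ 2) ^ p = c ^ p * |y| ^ (2 * p) := by
    rw [mul_rpow hc (sq_nonneg y), ← sq_abs, rpow_mul (abs_nonneg y), rpow_two]
  have hsplit := rpow_sub_one_mul_le_rpow_add_rpow hp (le_max_of_le_left hk : 0 ≤ max k |y|)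
    (by positivity : 0 ≤ c * y ^ 2)
  have hmax := max_rpow_le_rpow_add_rpow (p := p) hk (abs_nonneg y)
  have hy := rpow_le_rpow_add_one (abs_nonneg y) (by linarith) (by linarith : p ≤ 2 * p)
  nlinarith [rpow_nonneg hc p, rpow_nonneg (abs_nonneg y) (2 * p)]

theorem abs_add_rpow_le_of_one_le {p k y : ℝ} (hp : 1 ≤ p) (hk : 0 ≤ k) :
    |k + y| ^ (1 + p) ≤ k ^ (1 + p) + (1 + p) * k ^ p * y + k ^ p
      + (2 + p + ((1 + p) * p * 2 ^ (p - 1)) ^ p) * (|y| ^ (2 * p) + 1) := by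
  set c := (1 + p) * p * 2 ^ (p - 1)
  have hc : 0 ≤ c := by positivity
  have hcp : 0 ≤ c ^ p := rpow_nonneg hc p
  have hY : 0 ≤ |y| ^ (2 * p) + 1 := by positivity
  rcases le_or_gt 0 (k + y) with hky | hky
  · have hdiff := rpow_sub_rpow_mul_sub_le_of_one_le hky hk hp
    rw [add_sub_cancel_left] at hdiff
    have hmax : max (k + y) k ^ (p - 1) ≤ 2 ^ (p - 1) * max k |y| ^ (p - 1) := by
      rw [← mul_rpow zero_le_two (le_max_of_le_left hk)]
      refine rpow_le_rpow (le_max_of_le_right hk) (max_le ?_ ?_) (by linarith) <;>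
        linarith [le_abs_self y, le_max_left k |y|, le_max_right k |y|]
    calc |k + y| ^ (1 + p)
        ≤ k ^ (1 + p) + (1 + p) * k ^ p * y + (1 + p) * (((k + y) ^ p - k ^ p) * y) :=
          abs_add_rpow_le_of_nonneg (by linarith) hk hky
      _ ≤ k ^ (1 + p) + (1 + p) * k ^ p * y
            + (1 + p) * (p * max (k + y) k ^ (p - 1) * y ^ 2) := by
          gcongr
      _ ≤ k ^ (1 + p) + (1 + p) * k ^ p * y
            + (1 + p) * (p * (2 ^ (p - 1) * max k |y| ^ (p - 1)) * y ^ 2) := by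
          gcongr
      _ = k ^ (1 + p) + (1 + p) * k ^ p * y + max k |y| ^ (p - 1) * (c * y ^ 2) := by ring
      _ ≤ _ := by
          nlinarith [max_rpow_sub_one_mul_mul_sq_le (c := c) (y := y) hp hc hk, rpow_nonneg hk p]
  · have := rpow_le_rpow_add_one (r := 1 + p) (s := 2 * p) (abs_nonneg y) (by linarith)
      (by linarith)
    nlinarith [abs_add_rpow_le_of_neg (p := p) (by linarith) hk hky, rpow_nonneg hk p]

theorem integral_le_add_mul_integral_add_mul_integral {Ω : Type*} [MeasurableSpace Ω]
    {P : Measure Ω} [IsProbabilityMeasure P] {f Y Z : Ω → ℝ} {a b c : ℝ}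
    (hf : ∀ ω, 0 ≤ f ω) (hY : Integrable Y P) (hZ : Integrable Z P)
    (h : ∀ ω, f ω ≤ a + b * Y ω + c * Z ω) :
    ∫ ω, f ω ∂P ≤ a + b * ∫ ω, Y ω ∂P + c * ∫ ω, Z ω ∂P := by
  have hbY : Integrable (fun ω => a + b * Y ω) P := (integrable_const a).add (hY.const_mul b)
  calc ∫ ω, f ω ∂P ≤ ∫ ω, a + b * Y ω + c * Z ω ∂P :=
        integral_mono_of_nonneg (.of_forall hf) (hbY.add (hZ.const_mul c)) (.of_forall h)
    _ = a + b * ∫ ω, Y ω ∂P + c * ∫ ω, Z ω ∂P := by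
        rw [integral_add hbY (hZ.const_mul c), integral_add (integrable_const a) (hY.const_mul b),
          integral_const, integral_const_mul, integral_const_mul, probReal_univ, one_smul]

theorem MeasureTheory.Integrable.of_integrable_abs_rpow {Ω : Type*} [MeasurableSpace Ω]
    {P : Measure Ω} [IsFiniteMeasure P] {Y : Ω → ℝ} {q : ℝ} (hY : AEStronglyMeasurable Y P)
    (hq : 1 ≤ q) (h : Integrable (fun ω => |Y ω| ^ q) P) : Integrable Y P :=
  ((h.add (integrable_const 1)).mono' hY (.of_forall fun ω => by
    simpa using rpow_le_rpow_add_one (abs_nonneg (Y ω)) zero_le_one hq))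

/-- Moment inequality: for `p > 0` there is `K̃₁ > 0` (depending only on `p`) such that
for every probability space, every `k > 0` and every real random variable `Y` with the
stated integrability, `E|k+Y|^{1+p} ≤ k^{1+p} + (1+p)k^p E[Y] + K̃₁ E|Y|^{1+p}` when
`p ≤ 1`, and `E|k+Y|^{1+p} ≤ k^{1+p} + (1+p)k^p E[Y] + k^p + K̃₁(E|Y|^{2p} + 1)` when
`p > 1`. -/
theorem stmt9 (p : ℝ) (hp : 0 < p) :
    ∃ K : ℝ, 0 < K ∧
      ∀ (Ω : Type) [MeasurableSpace Ω] (P : Measure Ω) [IsProbabilityMeasure P]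
        (k : ℝ), 0 < k → ∀ Y : Ω → ℝ, Measurable Y →
        (p ≤ 1 → Integrable (fun ω => |Y ω| ^ (1 + p)) P →
          ∫ ω, |k + Y ω| ^ (1 + p) ∂P ≤
            k ^ (1 + p) + (1 + p) * k ^ p * (∫ ω, Y ω ∂P)
              + K * ∫ ω, |Y ω| ^ (1 + p) ∂P) ∧
        (1 < p → Integrable Y P → Integrable (fun ω => |Y ω| ^ (2 * p)) P →
          ∫ ω, |k + Y ω| ^ (1 + p) ∂P ≤
            k ^ (1 + p) + (1 + p) * k ^ p * (∫ ω, Y ω ∂P) + k ^ p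
              + K * ((∫ ω, |Y ω| ^ (2 * p) ∂P) + 1)) := by
  set K := 2 + p + ((1 + p) * p * 2 ^ (p - 1)) ^ p
  have hK : 2 + p ≤ K := le_add_of_nonneg_right (rpow_nonneg (by positivity) p)
  refine ⟨K, by linarith, fun Ω _ P _ k hk Y hY =>
    ⟨fun hp1 hInt => ?_, fun hp1 hYint hInt2 => ?_⟩⟩
  · have hmoment := integral_le_add_mul_integral_add_mul_integral
      (fun ω => rpow_nonneg (abs_nonneg _) _)
      (hInt.of_integrable_abs_rpow hY.aestronglyMeasurable (by linarith)) hInt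
      (fun ω => abs_add_rpow_le_of_le_one hp.le hp1 hk.le (y := Y ω))
    have := mul_le_mul_of_nonneg_right hK
      (integral_nonneg (μ := P) fun ω => rpow_nonneg (abs_nonneg (Y ω)) (1 + p))
    linarith
  · have hmoment := integral_le_add_mul_integral_add_mul_integral (a := k ^ (1 + p) + k ^ p)
      (b := (1 + p) * k ^ p) (c := K) (Z := fun ω => |Y ω| ^ (2 * p) + 1)
      (fun ω => rpow_nonneg (abs_nonneg _) _) hYint (hInt2.add (integrable_const 1))
      (fun ω => (abs_add_rpow_le_of_one_le hp1.le hk.le (y := Y ω)).trans_eq (by ring))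
    rw [integral_add hInt2 (integrable_const 1), integral_const, probReal_univ, one_smul] at hmoment
    linarith
end
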